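/- arXiv:2510.02804 — 6 statements merged into one kernel-verified Lean document; each statement's English description precedes it below -/
import Mathlib

section
/- Let I, J ⊆ V be disjoint of sizes i and j. The paired function p_{I,J} is identically zero if and only if (min(i,j) > min(k, n−k)) or (max(i,j) > max(k, n−k)). -/
/-!
`p_{I,J}` vanishes exactly when no `k`-set lies between `I` and `Jᶜ` and none lies between `J`
and `Iᶜ`. A `k`-set between `I` and `Jᶜ` exists iff `i ≤ k ≤ n - j`, so the claim reduces to the
arithmetic fact that, for `i + j ≤ n` and `k ≤ n`, both intervals miss `k` iff
`min k (n - k) < min i j` or `max k (n - k) < max i j`.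
-/

open Finset

theorem Finset.exists_subsuperset_card_eq_iff {α : Type*} {s t : Finset α} (hst : s ⊆ t) {k : ℕ} :
    (∃ u, s ⊆ u ∧ u ⊆ t ∧ #u = k) ↔ #s ≤ k ∧ k ≤ #t := by
  refine ⟨?_, fun ⟨hs, ht⟩ => exists_subsuperset_card_eq hst hs ht⟩
  rintro ⟨u, hsu, hut, rfl⟩
  exact ⟨card_le_card hsu, card_le_card hut⟩

theorem Finset.exists_card_eq_between_compl_iff {α : Type*} [Fintype α] [DecidableEq α]
    {I J : Finset α} (hd : Disjoint I J) {k : ℕ} :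
    (∃ K, I ⊆ K ∧ K ⊆ univ \ J ∧ #K = k) ↔ #I ≤ k ∧ k ≤ Fintype.card α - #J := by
  rw [exists_subsuperset_card_eq_iff (subset_sdiff.mpr ⟨subset_univ I, hd⟩),
    card_univ_sdiff]

theorem ite_one_zero_add_ite_one_zero_eq_zero_iff {R : Type*} [AddCommMonoidWithOne R]
    [PartialOrder R] [IsOrderedAddMonoid R] [ZeroLEOneClass R] [NeZero (1 : R)]
    (p q : Prop) [Decidable p] [Decidable q] :
    ((if p then (1 : R) else 0) + (if q then (1 : R) else 0)) = 0 ↔ ¬p ∧ ¬q := by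
  rw [add_eq_zero_iff_of_nonneg (by split_ifs <;> simp) (by split_ifs <;> simp)]
  simp

/-- `p_{I,J}` is identically zero iff `min(i,j) > min(k,n-k)` or `max(i,j) > max(k,n-k)`. -/
theorem paired_eq_zero_iff {α : Type*} [Fintype α] [DecidableEq α] (n k i j : ℕ)
    (hn : Fintype.card α = n) (hk : k ≤ n)
    (I J : Finset α) (hd : Disjoint I J) (hi : I.card = i) (hj : J.card = j) :
    (∀ K ∈ Finset.powersetCard k (Finset.univ : Finset α),
      ((if I ⊆ K ∧ K ⊆ Finset.univ \ J then (1 : ℝ) else 0) +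
        (if J ⊆ K ∧ K ⊆ Finset.univ \ I then (1 : ℝ) else 0)) = 0) ↔
      (min k (n - k) < min i j ∨ max k (n - k) < max i j) := by
  have hij : i + j ≤ n := by
    rw [← hi, ← hj, ← card_union_of_disjoint hd, ← hn]
    exact card_le_univ _
  have hI := exists_card_eq_between_compl_iff hd (k := k)
  have hJ := exists_card_eq_between_compl_iff hd.symm (k := k)
  rw [hn, hi, hj] at hI hJ
  simp only [mem_powersetCard, subset_univ, true_and, ite_one_zero_add_ite_one_zero_eq_zero_iff]
  have hnone : (∀ K : Finset α, #K = k → ¬(I ⊆ K ∧ K ⊆ univ \ J) ∧ ¬(J ⊆ K ∧ K ⊆ univ \ I)) ↔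
      ¬(∃ K, I ⊆ K ∧ K ⊆ univ \ J ∧ #K = k) ∧ ¬(∃ K, J ⊆ K ∧ K ⊆ univ \ I ∧ #K = k) := by
    simp only [not_exists, not_and, ← forall_and]
    exact forall_congr' fun K => by tauto
  rw [hnone, hI, hJ]
  omega
end

section
/- Let I, J ⊆ V be disjoint of sizes i and j. Then the paired function p_{I,J} has size exactly 1 if and only if either (min(i,j) = min(k,n−k) < max(i,j) ≤ max(k,n−k)) or (min(i,j) ≤ min(k,n−k) < max(i,j) = max(k,n−k)). -/
/-!
The sum splits into the two legs `#F_{I,Jᶜ} = C(n - i - j, k - i)` and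
`#F_{J,Iᶜ} = C(n - i - j, k - j)`. A sum of two naturals is `1` exactly when one is `1` and the
other `0`, and `C(m, r)` is `0` iff `r ∉ [0, m]` and `1` iff `r ∈ {0, m}`; the min/max condition is
this case analysis rewritten.
-/

open Finset

section Legs

variable {n k i j : ℕ}

-- `C(n - i - j, k - i)` with the convention that it vanishes for `k < i`.
lemma ite_choose_eq_zero_iff (hij : i + j ≤ n) :
    (if i ≤ k then (n - j - i).choose (k - i) else 0) = 0 ↔ k < i ∨ n - j < k := by
  split_ifs with hik
  · rw [Nat.choose_eq_zero_iff]
    omega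
  · simp only [true_iff]
    omega

lemma ite_choose_eq_one_iff (hij : i + j ≤ n) :
    (if i ≤ k then (n - j - i).choose (k - i) else 0) = 1 ↔ k = i ∨ (i ≤ k ∧ k = n - j) := by
  split_ifs with hik
  · rw [Nat.choose_eq_one_iff]
    omega
  · simp only [false_iff]
    omega

lemma ite_choose_add_ite_choose_eq_one_iff (hk : k ≤ n) (hij : i + j ≤ n) :
    (if i ≤ k then (n - j - i).choose (k - i) else 0) +
        (if j ≤ k then (n - i - j).choose (k - j) else 0) = 1 ↔
      ((min i j = min k (n - k) ∧ min k (n - k) < max i j ∧ max i j ≤ max k (n - k)) ∨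
       (min i j ≤ min k (n - k) ∧ min k (n - k) < max i j ∧ max i j = max k (n - k))) := by
  rw [Nat.add_eq_one_iff, ite_choose_eq_zero_iff hij, ite_choose_eq_one_iff hij,
    ite_choose_eq_zero_iff (by omega), ite_choose_eq_one_iff (by omega)]
  omega

end Legs

lemma card_filter_powersetCard_univ_subset_subset {α : Type*} [Fintype α] [DecidableEq α]
    {s t : Finset α} (hst : s ⊆ t) (k : ℕ) :
    #{K ∈ powersetCard k (univ : Finset α) | s ⊆ K ∧ K ⊆ t} =
      if #s ≤ k then (#t - #s).choose (k - #s) else 0 := by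
  have hfilter : {K ∈ powersetCard k (univ : Finset α) | s ⊆ K ∧ K ⊆ t} = {K ∈ t.powersetCard k | s ⊆ K} := by
    ext K
    simp only [mem_filter, mem_powersetCard, subset_univ, true_and]
    tauto
  rw [hfilter]
  split_ifs with hsk
  · exact card_filter_powersetCard_subset s t k hst hsk
  · refine card_eq_zero.mpr (filter_eq_empty_iff.mpr fun K hK hsK => hsk ?_)
    exact (mem_powersetCard.mp hK).2 ▸ card_le_card hsK

/-- `#p_{I,J} = 1` iff `min(i,j) = min(k,n-k) < max(i,j) ≤ max(k,n-k)` or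
`min(i,j) ≤ min(k,n-k) < max(i,j) = max(k,n-k)`. -/
theorem paired_size_one_iff {α : Type*} [Fintype α] [DecidableEq α] (n k i j : ℕ)
    (hn : Fintype.card α = n) (hk : k ≤ n)
    (I J : Finset α) (hd : Disjoint I J) (hi : I.card = i) (hj : J.card = j) :
    (∑ K ∈ Finset.powersetCard k (Finset.univ : Finset α),
      ((if I ⊆ K ∧ K ⊆ Finset.univ \ J then (1 : ℝ) else 0) +
        (if J ⊆ K ∧ K ⊆ Finset.univ \ I then (1 : ℝ) else 0)) = 1) ↔
      ((min i j = min k (n - k) ∧ min k (n - k) < max i j ∧ max i j ≤ max k (n - k)) ∨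
       (min i j ≤ min k (n - k) ∧ min k (n - k) < max i j ∧ max i j = max k (n - k))) := by
  have hij : i + j ≤ n := by
    rw [← hi, ← hj, ← card_union_of_disjoint hd, ← hn]
    exact card_le_univ _
  have hcompl_card {s : Finset α} : #(univ \ s) = n - #s := by
    rw [card_univ_sdiff, hn]
  rw [sum_add_distrib, sum_boole, sum_boole, ← Nat.cast_add, Nat.cast_eq_one,
    card_filter_powersetCard_univ_subset_subset (subset_sdiff.mpr ⟨subset_univ I, hd⟩),
    card_filter_powersetCard_univ_subset_subset (subset_sdiff.mpr ⟨subset_univ J, hd.symm⟩),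
    hcompl_card, hcompl_card, hi, hj]
  exact ite_choose_add_ite_choose_eq_one_iff hk hij
end

section
/- Let I, J ⊆ V be disjoint of sizes i and j. Then #p_{I,J} = 2 if and only if one of the following holds: (1) i = j = min(k,n−k); (2) n = 2k, max(i,j) = k, and i ≠ j; (3) n ∉ {2k−1, 2k, 2k+1} and {i,j} = {k−1, n−k−1}. -/
open Finset

set_option maxHeartbeats 1000000

private lemma le_choose_aux (m r : ℕ) (h1 : 1 ≤ r) (h2 : r < m) : m ≤ m.choose r := by
  induction m with
  | zero => omega
  | succ m ih =>
    rcases eq_or_lt_of_le (Nat.lt_succ_iff.mp h2) with h | h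
    · rw [h, Nat.choose_succ_self_right]
    · obtain ⟨r', rfl⟩ : ∃ r', r = r' + 1 := ⟨r - 1, by omega⟩
      have h3 := ih h
      have h4 : 0 < m.choose r' := Nat.choose_pos (by omega)
      rw [Nat.choose_succ_succ]
      simp only [Nat.succ_eq_add_one] at *
      omega

private lemma choose_eq_one_iff (m r : ℕ) : m.choose r = 1 ↔ r = 0 ∨ r = m := by
  constructor
  · intro h
    by_contra hc
    push_neg at hc
    rcases le_or_gt r m with h1 | h1
    · have h2 : 1 ≤ r := by omega
      have h3 : r < m := by omega
      have := le_choose_aux m r h2 h3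
      omega
    · rw [Nat.choose_eq_zero_of_lt h1] at h
      omega
  · rintro (rfl | rfl)
    · simp
    · simp

private lemma choose_eq_two_iff (m r : ℕ) : m.choose r = 2 ↔ m = 2 ∧ r = 1 := by
  constructor
  · intro h
    rcases le_or_gt r m with h1 | h1
    · have hr0 : r ≠ 0 := by rintro rfl; simp at h
      have hrm : r ≠ m := by rintro rfl; simp at h
      have := le_choose_aux m r (by omega) (by omega)
      have : m ≤ 2 := by omega
      interval_cases m <;> interval_cases r <;> simp_all
    · rw [Nat.choose_eq_zero_of_lt h1] at h; omega
  · rintro ⟨rfl, rfl⟩; rfl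

private lemma count_aux {α : Type*} [Fintype α] [DecidableEq α] (k : ℕ) (I J : Finset α)
    (hd : Disjoint I J) :
    (Finset.filter (fun K => I ⊆ K ∧ K ⊆ Finset.univ \ J)
        (Finset.powersetCard k (Finset.univ : Finset α))).card
      = if I.card ≤ k then (Fintype.card α - I.card - J.card).choose (k - I.card) else 0 := by
  split_ifs with h
  · have hIJ : I ⊆ univ \ J := by
      intro x hx
      exact mem_sdiff.2 ⟨mem_univ x, fun hxJ => (Finset.disjoint_left.mp hd hx) hxJ⟩
    have hcard : ((univ \ J) \ I).card = Fintype.card α - I.card - J.card := by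
      rw [Finset.card_sdiff_of_subset (by
        intro x hx
        exact mem_sdiff.2 ⟨mem_univ x, fun hxJ => (Finset.disjoint_left.mp hd hx) hxJ⟩)]
      rw [Finset.card_sdiff_of_subset (Finset.subset_univ J), Finset.card_univ]
      omega
    have key : (Finset.filter (fun K => I ⊆ K ∧ K ⊆ Finset.univ \ J)
        (Finset.powersetCard k (Finset.univ : Finset α))).card
        = (Finset.powersetCard (k - I.card) ((univ \ J) \ I)).card := by
      apply Finset.card_nbij' (fun K => K \ I) (fun S => S ∪ I)
      · intro K hK
        rw [Finset.mem_coe, Finset.mem_filter, Finset.mem_powersetCard] at hK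
        obtain ⟨⟨_, hKc⟩, hIK, hKJ⟩ := hK
        rw [Finset.mem_coe, Finset.mem_powersetCard]
        refine ⟨Finset.sdiff_subset_sdiff hKJ (Finset.Subset.refl I), ?_⟩
        rw [Finset.card_sdiff_of_subset hIK, hKc]
      · intro S hS
        rw [Finset.mem_coe, Finset.mem_powersetCard] at hS
        obtain ⟨hS1, hS2⟩ := hS
        have hSI : Disjoint S I := by
          rw [Finset.disjoint_left]
          intro x hx hxI
          exact (Finset.mem_sdiff.mp (hS1 hx)).2 hxI
        rw [Finset.mem_coe, Finset.mem_filter, Finset.mem_powersetCard]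
        refine ⟨⟨Finset.subset_univ _, ?_⟩, Finset.subset_union_right, ?_⟩
        · rw [Finset.card_union_of_disjoint hSI, hS2]
          omega
        · exact Finset.union_subset (hS1.trans Finset.sdiff_subset) hIJ
      · intro K hK
        rw [Finset.mem_coe, Finset.mem_filter] at hK
        exact Finset.sdiff_union_of_subset hK.2.1
      · intro S hS
        rw [Finset.mem_coe, Finset.mem_powersetCard] at hS
        have hSI : Disjoint S I := by
          rw [Finset.disjoint_left]
          intro x hx hxI
          exact (Finset.mem_sdiff.mp (hS.1 hx)).2 hxI
        exact Finset.union_sdiff_cancel_right hSI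
    rw [key, Finset.card_powersetCard, hcard]
  · rw [Finset.card_eq_zero, Finset.filter_eq_empty_iff]
    intro K hK
    rw [Finset.mem_powersetCard] at hK
    rintro ⟨hIK, -⟩
    have := Finset.card_le_card hIK
    omega

/-- `#p_{I,J} = 2` iff (1) `i = j = min(k,n-k)`, or (2) `n = 2k`, `max(i,j) = k` and
`i ≠ j`, or (3) `n ∉ {2k-1, 2k, 2k+1}` and `{i,j} = {k-1, n-k-1}`. -/
theorem paired_size_two_iff {α : Type*} [Fintype α] [DecidableEq α] (n k i j : ℕ)
    (hn : Fintype.card α = n) (hk : k ≤ n)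
    (I J : Finset α) (hd : Disjoint I J) (hi : I.card = i) (hj : J.card = j) :
    (∑ K ∈ Finset.powersetCard k (Finset.univ : Finset α),
      ((if I ⊆ K ∧ K ⊆ Finset.univ \ J then (1 : ℝ) else 0) +
        (if J ⊆ K ∧ K ⊆ Finset.univ \ I then (1 : ℝ) else 0)) = 2) ↔
      ((i = min k (n - k) ∧ j = min k (n - k)) ∨
       (n = 2 * k ∧ max i j = k ∧ i ≠ j) ∨
       (((n : ℤ) ≠ 2 * k - 1 ∧ (n : ℤ) ≠ 2 * k ∧ (n : ℤ) ≠ 2 * k + 1) ∧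
         ({(i : ℤ), (j : ℤ)} : Set ℤ) = {(k : ℤ) - 1, (n : ℤ) - k - 1})) := by
  have hij : i + j ≤ n := by
    have h1 : (I ∪ J).card = i + j := by
      rw [Finset.card_union_of_disjoint hd, hi, hj]
    have h2 := Finset.card_le_univ (I ∪ J)
    rw [hn] at h2
    omega
  have hc1 := count_aux k I J hd
  have hc2 := count_aux k J I hd.symm
  rw [hi, hj, hn] at hc1
  rw [hi, hj, hn] at hc2
  rw [Finset.sum_add_distrib, Finset.sum_boole, Finset.sum_boole, hc1, hc2]
  rw [show (2 : ℝ) = ((2 : ℕ) : ℝ) by norm_num, ← Nat.cast_add, Nat.cast_inj]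
  rw [Set.pair_eq_pair_iff]
  have shape : ∀ a b : ℕ, a + b = 2 ↔ ((a = 2 ∧ b = 0) ∨ (a = 1 ∧ b = 1) ∨ (a = 0 ∧ b = 2)) := by
    intro a b; omega
  have hswap : n - j - i = n - i - j := by omega
  rw [hswap] at hc2 ⊢
  split_ifs with h1 h2 h2
  · rw [shape]
    simp only [choose_eq_two_iff, choose_eq_one_iff, Nat.choose_eq_zero_iff]
    omega
  · rw [add_zero, choose_eq_two_iff]
    omega
  · rw [zero_add, choose_eq_two_iff]
    omega
  · omega
end

section
/- Let I, J ⊆ V be disjoint of sizes i and j with max(i,j) ≤ min(k, n−k) (so both legs of p_{I,J} are nonempty). Then the union of all blocks of P_{I,J} = supp(p_{I,J}) equals I ∪ J if i = j = k, and equals V otherwise; and the intersection of all blocks of P_{I,J} equals (I ∪ J)ᶜ if i = j = n−k, and is empty otherwise. -/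
open Finset

/-!
`P_{I,J}` is the union of the two intervals `F_{I,Jᶜ}` and `F_{J,Iᶜ}` of the `k`-th layer, so its
union and intersection are the joins and meets of those of the two intervals. For `A ⊆ B` with
`#A ≤ k ≤ #B`, every `x ∈ B` lies in some `k`-set between `A` and `B` unless `#A = k` (extend
`insert x A`), and every `x ∉ A` is missed by one unless `#B = k` (shrink `B.erase x`).
-/

namespace Finset

variable {α : Type*} [Fintype α] [DecidableEq α]

/-- The interval `F_{A,B}` of `k`-subsets `K` with `A ⊆ K ⊆ B`. -/
def kSetsBetween (k : ℕ) (A B : Finset α) : Finset (Finset α) :=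
  (powersetCard k univ).filter fun K => A ⊆ K ∧ K ⊆ B

variable {k : ℕ} {A B K : Finset α}

@[simp]
lemma mem_kSetsBetween : K ∈ kSetsBetween k A B ↔ #K = k ∧ A ⊆ K ∧ K ⊆ B := by
  simp [kSetsBetween]

lemma kSetsBetween_nonempty (hAB : A ⊆ B) (hA : #A ≤ k) (hB : k ≤ #B) :
    (kSetsBetween k A B).Nonempty := by
  obtain ⟨K, hAK, hKB, hK⟩ := exists_subsuperset_card_eq hAB hA hB
  exact ⟨K, mem_kSetsBetween.2 ⟨hK, hAK, hKB⟩⟩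

lemma kSetsBetween_mono {A' B' : Finset α} (hA : A ⊆ A') (hB : B' ⊆ B) :
    kSetsBetween k A' B' ⊆ kSetsBetween k A B := fun K hK => by
  obtain ⟨hKk, hAK, hKB⟩ := mem_kSetsBetween.1 hK
  exact mem_kSetsBetween.2 ⟨hKk, hA.trans hAK, hKB.trans hB⟩

lemma kSetsBetween_eq_singleton_left (hAB : A ⊆ B) (hA : #A = k) :
    kSetsBetween k A B = {A} := by
  ext K
  simp only [mem_kSetsBetween, mem_singleton]
  constructor
  · rintro ⟨hK, hAK, -⟩
    exact (eq_of_subset_of_card_le hAK (by omega)).symm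
  · rintro rfl
    exact ⟨hA, Subset.rfl, hAB⟩

lemma kSetsBetween_eq_singleton_right (hAB : A ⊆ B) (hB : #B = k) :
    kSetsBetween k A B = {B} := by
  ext K
  simp only [mem_kSetsBetween, mem_singleton]
  constructor
  · rintro ⟨hK, -, hKB⟩
    exact eq_of_subset_of_card_le hKB (by omega)
  · rintro rfl
    exact ⟨hB, hAB, Subset.rfl⟩

lemma sup_kSetsBetween_of_card_lt (hAB : A ⊆ B) (hA : #A < k) (hB : k ≤ #B) :
    (kSetsBetween k A B).sup id = B := by
  refine Subset.antisymm (Finset.sup_le fun K hK => (mem_kSetsBetween.1 hK).2.2) fun x hx => ?_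
  obtain ⟨K, hK⟩ :=
    kSetsBetween_nonempty (insert_subset hx hAB) ((card_insert_le x A).trans hA) hB
  have hxK : x ∈ K := (mem_kSetsBetween.1 hK).2.1 (mem_insert_self x A)
  exact mem_sup.2 ⟨K, kSetsBetween_mono (subset_insert x A) Subset.rfl hK, hxK⟩

lemma inf_kSetsBetween_of_lt_card (hAB : A ⊆ B) (hA : #A ≤ k) (hB : k < #B) :
    (kSetsBetween k A B).inf id = A := by
  refine Subset.antisymm (fun x hx => ?_) (Finset.le_inf fun K hK => (mem_kSetsBetween.1 hK).2.1)
  by_contra hxA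
  have hB' : k ≤ #(B.erase x) := by
    have := pred_card_le_card_erase (s := B) (a := x)
    omega
  obtain ⟨K, hK⟩ := kSetsBetween_nonempty (subset_erase.2 ⟨hAB, hxA⟩) hA hB'
  have hxK : x ∈ K := mem_inf.1 hx K (kSetsBetween_mono Subset.rfl (erase_subset x B) hK)
  exact notMem_erase x B ((mem_kSetsBetween.1 hK).2.2 hxK)

lemma sup_kSetsBetween (hAB : A ⊆ B) (hA : #A ≤ k) (hB : k ≤ #B) :
    (kSetsBetween k A B).sup id = if #A = k then A else B := by
  split_ifs with h
  · simp [kSetsBetween_eq_singleton_left hAB h]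
  · exact sup_kSetsBetween_of_card_lt hAB (lt_of_le_of_ne hA h) hB

lemma inf_kSetsBetween (hAB : A ⊆ B) (hA : #A ≤ k) (hB : k ≤ #B) :
    (kSetsBetween k A B).inf id = if #B = k then B else A := by
  split_ifs with h
  · simp [kSetsBetween_eq_singleton_right hAB h]
  · exact inf_kSetsBetween_of_lt_card hAB hA (lt_of_le_of_ne' hB h)

end Finset

/-- When both legs of `p_{I,J}` are nonempty (i.e. `max(i,j) ≤ min(k,n-k)`),
the union of all blocks of `P_{I,J}` is `I ∪ J` if `i = j = k` and `V` otherwise,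
and the intersection of all blocks is `(I ∪ J)ᶜ` if `i = j = n-k` and `∅` otherwise. -/
theorem paired_union_inter {α : Type*} [Fintype α] [DecidableEq α] (n k i j : ℕ)
    (hn : Fintype.card α = n) (hk : k ≤ n)
    (I J : Finset α) (hd : Disjoint I J) (hi : I.card = i) (hj : J.card = j)
    (hlegs : max i j ≤ min k (n - k)) :
    ((Finset.powersetCard k (Finset.univ : Finset α)).filter
        (fun K => (I ⊆ K ∧ K ⊆ Finset.univ \ J) ∨ (J ⊆ K ∧ K ⊆ Finset.univ \ I))).sup id =
      (if i = k ∧ j = k then I ∪ J else Finset.univ) ∧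
    ((Finset.powersetCard k (Finset.univ : Finset α)).filter
        (fun K => (I ⊆ K ∧ K ⊆ Finset.univ \ J) ∨ (J ⊆ K ∧ K ⊆ Finset.univ \ I))).inf id =
      (if i = n - k ∧ j = n - k then Finset.univ \ (I ∪ J) else ∅) := by
  have hIJ : I ⊆ univ \ J := fun x hx => mem_sdiff.2 ⟨mem_univ x, disjoint_left.1 hd hx⟩
  have hJI : J ⊆ univ \ I := fun x hx => mem_sdiff.2 ⟨mem_univ x, disjoint_right.1 hd hx⟩
  have hJc : #(univ \ J) = n - j := by rw [card_univ_sdiff, hn, hj]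
  have hIc : #(univ \ I) = n - i := by rw [card_univ_sdiff, hn, hi]
  rw [filter_or, ← kSetsBetween, ← kSetsBetween, sup_union, inf_union,
    sup_kSetsBetween hIJ (by omega) (by omega), sup_kSetsBetween hJI (by omega) (by omega),
    inf_kSetsBetween hIJ (by omega) (by omega), inf_kSetsBetween hJI (by omega) (by omega),
    hi, hj, hJc, hIc]
  have hdisj : ∀ x, x ∈ I → x ∉ J := fun x hxI => disjoint_left.1 hd hxI
  constructor <;> split_ifs <;> first
    | omega
    | (ext x; specialize hdisj x; simp only [mem_union, mem_sdiff, mem_univ, mem_inter,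
        notMem_empty, true_and, sup_eq_union, inf_eq_inter] <;> tauto)
end

section
/- Let I, J ⊆ V be disjoint of sizes i and j. Then p_{I,J} is the constant function 1 on binom(V,k) if and only if one of the following holds: (1) i + j = 1; (2) n = 2 and k = i = j = 1; (3) k ∈ {0, n}, min(i,j) = 0, and max(i,j) ≠ 0. -/
/-!
Write `A(K)` for `I ⊆ K ∧ K ∩ J = ∅` and `B(K)` for `J ⊆ K ∧ K ∩ I = ∅`; the condition is that
exactly one of `A(K)`, `B(K)` holds for every `k`-set `K`. For `k ∈ {0, n}` only `K = ∅`
resp. `K = V` occur, and this reduces to exactly one of `I`, `J` being empty. For `0 < k < n`: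
if `I = ∅`, the condition is `J ⊆ K xor J ∩ K = ∅`, which rules out `J = ∅` and, choosing `K`
through one point of `J` but not another, any `|J| ≥ 2`. If `a ∈ I` and `b ∈ J`, every `k`-set
must contain exactly one of `a`, `b`, forcing `k = 1`, then `I = {a}`, `J = {b}`, and a third
point `c` would give a bad `K = {c}`.
-/

open Finset

theorem ite_add_ite_eq_one_iff_xor {R : Type*} [AddGroupWithOne R] [NeZero (1 : R)]
    {P Q : Prop} [Decidable P] [Decidable Q] :
    ((if P then (1 : R) else 0) + (if Q then (1 : R) else 0) = 1) ↔ Xor P Q := by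
  by_cases hP : P <;> by_cases hQ : Q <;> simp [hP, hQ]

section Slice

variable {α : Type*}

theorem exists_card_eq_mem_iff_mem [Fintype α] [DecidableEq α] (a b : α) {k : ℕ}
    (hkn : k ≤ Fintype.card α) (hk1 : k ≠ 1) : ∃ K : Finset α, #K = k ∧ (a ∈ K ↔ b ∈ K) := by
  rcases Nat.eq_zero_or_pos k with rfl | hk0
  · exact ⟨∅, card_empty, by simp⟩
  obtain ⟨K, habK, -, hK⟩ := exists_subsuperset_card_eq (subset_univ {a, b})
    (card_le_two.trans (by omega : 2 ≤ k)) (by rwa [card_univ])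
  exact ⟨K, hK, iff_of_true (habK (by simp)) (habK (by simp))⟩

theorem exists_card_eq_mem_notMem [Fintype α] [DecidableEq α] {a b : α} (hab : a ≠ b) {k : ℕ}
    (hk0 : 0 < k) (hkn : k < Fintype.card α) : ∃ K : Finset α, #K = k ∧ a ∈ K ∧ b ∉ K := by
  have hsub : {a} ⊆ (univ \ {b} : Finset α) := by simp [hab]
  obtain ⟨K, haK, hKb, hK⟩ :=
    exists_subsuperset_card_eq hsub (n := k) (by rwa [card_singleton])
    (by rw [card_sdiff_of_subset (subset_univ _), card_univ, card_singleton]; omega)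
  exact ⟨K, hK, haK (mem_singleton_self a), fun hb => by simpa using hKb hb⟩

/-- The families `F_{I,Jᶜ}` and `F_{J,Iᶜ}` partition the `k`-subsets of `α`. -/
def PartitionsSlice (I J : Finset α) (k : ℕ) : Prop :=
  ∀ K : Finset α, #K = k → Xor (I ⊆ K ∧ Disjoint K J) (J ⊆ K ∧ Disjoint K I)

variable {I J : Finset α} {k : ℕ}

theorem partitionsSlice_comm : PartitionsSlice I J k ↔ PartitionsSlice J I k :=
  forall₂_congr fun _ _ => (xor_comm _ _).to_iff

theorem partitionsSlice_zero_iff : PartitionsSlice I J 0 ↔ Xor (I = ∅) (J = ∅) := by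
  simp [PartitionsSlice, subset_empty]

theorem partitionsSlice_card_iff [Fintype α] :
    PartitionsSlice I J (Fintype.card α) ↔ Xor (J = ∅) (I = ∅) := by
  simp [PartitionsSlice, card_eq_iff_eq_univ, disjoint_left, eq_empty_iff_forall_notMem]

theorem partitionsSlice_empty_left_iff [Fintype α] [DecidableEq α] (hk0 : 0 < k)
    (hkn : k < Fintype.card α) :
    PartitionsSlice ∅ J k ↔ #J = 1 := by
  constructor
  · intro H
    obtain ⟨K₀, -, hK₀⟩ := exists_subset_card_eq (s := (univ : Finset α)) (n := k)
      (by rw [card_univ]; omega)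
    have hJ : J.Nonempty := by
      rw [nonempty_iff_ne_empty]
      rintro rfl
      simpa using H K₀ hK₀
    refine le_antisymm (card_le_one.mpr fun a ha b hb => ?_) hJ.card_pos
    by_contra hab
    obtain ⟨K, hK, haK, hbK⟩ := exists_card_eq_mem_notMem hab hk0 hkn
    rcases H K hK with ⟨⟨-, hKJ⟩, -⟩ | ⟨⟨hJK, -⟩, -⟩
    · exact disjoint_left.mp hKJ haK ha
    · exact hbK (hJK hb)
  · intro hJ K _
    obtain ⟨a, rfl⟩ := card_eq_one.mp hJ
    by_cases ha : a ∈ K <;> simp [ha]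

theorem partitionsSlice_iff_of_nonempty [Fintype α] [DecidableEq α] (hd : Disjoint I J)
    (hI : I.Nonempty) (hJ : J.Nonempty) (hkn : k ≤ Fintype.card α) :
    PartitionsSlice I J k ↔ Fintype.card α = 2 ∧ k = 1 ∧ #I = 1 ∧ #J = 1 := by
  obtain ⟨a, ha⟩ := hI
  obtain ⟨b, hb⟩ := hJ
  have hab : a ≠ b := fun h => disjoint_left.mp hd ha (h ▸ hb)
  constructor
  · intro H
    have hxor : ∀ K : Finset α, #K = k → (a ∈ K ↔ b ∉ K) := by
      intro K hK
      rcases H K hK with ⟨⟨hIK, hKJ⟩, -⟩ | ⟨⟨hJK, hKI⟩, -⟩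
      · exact iff_of_true (hIK ha) (disjoint_right.mp hKJ hb)
      · exact iff_of_false (disjoint_right.mp hKI ha) (not_not.mpr (hJK hb))
    have hk1 : k = 1 := by
      by_contra hk1
      obtain ⟨K, hK, habK⟩ := exists_card_eq_mem_iff_mem a b hkn hk1
      have := hxor K hK
      tauto
    subst hk1
    have hIa : I = {a} := by
      rcases H {a} (card_singleton a) with ⟨⟨hIK, -⟩, -⟩ | ⟨⟨-, hKI⟩, -⟩
      · exact (subset_singleton_iff.mp hIK).resolve_left (ne_empty_of_mem ha)
      · exact absurd ha (disjoint_singleton_left.mp hKI)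
    have hJb : J = {b} := by
      rcases H {b} (card_singleton b) with ⟨⟨-, hKJ⟩, -⟩ | ⟨⟨hJK, -⟩, -⟩
      · exact absurd hb (disjoint_singleton_left.mp hKJ)
      · exact (subset_singleton_iff.mp hJK).resolve_left (ne_empty_of_mem hb)
    subst hIa hJb
    have hcard : Fintype.card α = 2 := by
      refine le_antisymm ?_ (by simpa [hab] using card_le_univ {a, b})
      by_contra! h3
      obtain ⟨c, hc⟩ : ({a, b}ᶜ : Finset α).Nonempty := by
        rw [← card_pos, card_compl, card_pair hab]
        omega
      rcases H {c} (card_singleton c) with ⟨⟨hac, -⟩, -⟩ | ⟨⟨hbc, -⟩, -⟩ <;> simp_all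
    simp [hcard]
  · rintro ⟨hcard, rfl, hI1, hJ1⟩ K hK
    obtain ⟨a', rfl⟩ := card_eq_one.mp hI1
    obtain ⟨b', rfl⟩ := card_eq_one.mp hJ1
    obtain ⟨x, rfl⟩ := card_eq_one.mp hK
    rw [mem_singleton] at ha hb
    subst ha hb
    have hx : x = a ∨ x = b := by
      have huniv : ({a, b} : Finset α) = univ :=
        eq_univ_of_card _ (by rw [card_pair hab, hcard])
      simpa [← huniv] using mem_univ x
    rcases hx with rfl | rfl <;> simp [hab, hab.symm]

theorem forall_ite_add_ite_eq_one_iff_partitionsSlice [Fintype α] [DecidableEq α] :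
    (∀ K ∈ powersetCard k (univ : Finset α),
      ((if I ⊆ K ∧ K ⊆ univ \ J then (1 : ℝ) else 0) +
        (if J ⊆ K ∧ K ⊆ univ \ I then (1 : ℝ) else 0)) = 1) ↔ PartitionsSlice I J k := by
  simp only [mem_powersetCard_univ, subset_sdiff, subset_univ, true_and,
    ite_add_ite_eq_one_iff_xor, PartitionsSlice]

end Slice

/-- `p_{I,J} = 1` iff (1) `i + j = 1`, or (2) `n = 2` and `k = i = j = 1`, or
(3) `k ∈ {0,n}`, `min(i,j) = 0` and `max(i,j) ≠ 0`. -/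
theorem paired_eq_one_iff {α : Type*} [Fintype α] [DecidableEq α] (n k i j : ℕ)
    (hn : Fintype.card α = n) (hk : k ≤ n)
    (I J : Finset α) (hd : Disjoint I J) (hi : I.card = i) (hj : J.card = j) :
    (∀ K ∈ Finset.powersetCard k (Finset.univ : Finset α),
      ((if I ⊆ K ∧ K ⊆ Finset.univ \ J then (1 : ℝ) else 0) +
        (if J ⊆ K ∧ K ⊆ Finset.univ \ I then (1 : ℝ) else 0)) = 1) ↔
      ((i + j = 1) ∨
       (n = 2 ∧ k = 1 ∧ i = 1 ∧ j = 1) ∨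
       ((k = 0 ∨ k = n) ∧ min i j = 0 ∧ max i j ≠ 0)) := by
  subst hn hi hj
  rw [forall_ite_add_ite_eq_one_iff_partitionsSlice]
  rcases Nat.eq_zero_or_pos k with rfl | hk0
  · rw [partitionsSlice_zero_iff, ← card_eq_zero, ← card_eq_zero (s := J), xor_def]
    omega
  rcases hk.eq_or_lt with rfl | hkn
  · rw [partitionsSlice_card_iff, ← card_eq_zero, ← card_eq_zero (s := I), xor_def]
    omega
  rcases I.eq_empty_or_nonempty with rfl | hI
  · rw [partitionsSlice_empty_left_iff hk0 hkn, card_empty]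
    omega
  rcases J.eq_empty_or_nonempty with rfl | hJ
  · rw [partitionsSlice_comm, partitionsSlice_empty_left_iff hk0 hkn, card_empty]
    omega
  rw [partitionsSlice_iff_of_nonempty hd hI hJ hk]
  have := hI.card_pos
  have := hJ.card_pos
  omega
end

section
/- Averaging identity: let n = 2k, I, J ⊆ V disjoint with |I| = i < k. Then (k − i) · p_{I,J} = Σ p_{Ī, J}, where the sum runs over all (i+1)-subsets Ī of V with I ⊆ Ī ⊆ Jᶜ. -/
/-!
For fixed `K`, the sets `I'` in the sum are `I ∪ {x}` with `x ∉ I ∪ J`. The first indicator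
survives exactly when `x ∈ K \ I` (and `I ⊆ K ⊆ Jᶜ`), the second exactly when `x ∈ Kᶜ \ I`
(and `J ⊆ K ⊆ Iᶜ`); since `|K| = |Kᶜ| = k`, each of the two counts is `k - i`.
-/

open Finset

section

variable {α : Type*} [DecidableEq α]

theorem card_filter_superset_powersetCard_succ {I T : Finset α} (hIT : I ⊆ T) :
    #{I' ∈ powersetCard (#I + 1) T | I ⊆ I'} = #T - #I := by
  rw [card_filter_powersetCard_subset I T _ hIT (Nat.le_add_right _ 1), Nat.add_sub_cancel_left,
    Nat.choose_one_right]

theorem sum_boole_subset_filter_superset_powersetCard_succ {R : Type*} [AddCommMonoidWithOne R]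
    {I T U : Finset α} (hTU : T ⊆ U) :
    ∑ I' ∈ {I' ∈ powersetCard (#I + 1) U | I ⊆ I'}, (if I' ⊆ T then (1 : R) else 0) =
      if I ⊆ T then ((#T - #I : ℕ) : R) else 0 := by
  have hfilter : {I' ∈ {I' ∈ powersetCard (#I + 1) U | I ⊆ I'} | I' ⊆ T} =
      {I' ∈ powersetCard (#I + 1) T | I ⊆ I'} := by
    ext I'
    simp only [mem_filter, mem_powersetCard]
    exact ⟨fun ⟨⟨⟨_, hcard⟩, hII'⟩, hI'T⟩ => ⟨⟨hI'T, hcard⟩, hII'⟩,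
      fun ⟨⟨hI'T, hcard⟩, hII'⟩ => ⟨⟨⟨hI'T.trans hTU, hcard⟩, hII'⟩, hI'T⟩⟩
  rw [sum_boole, hfilter]
  split_ifs with hIT
  · rw [card_filter_superset_powersetCard_succ hIT]
  · rw [filter_false_of_mem fun I' hI' hII' => hIT (hII'.trans (mem_powersetCard.mp hI').1),
      card_empty, Nat.cast_zero]

theorem subset_univ_sdiff_comm [Fintype α] {s t : Finset α} :
    s ⊆ univ \ t ↔ t ⊆ univ \ s := by
  simp only [subset_sdiff, subset_univ, true_and, disjoint_comm]

end

theorem paired_averaging_general {α : Type*} [Fintype α] [DecidableEq α] (k i : ℕ)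
    (hn : Fintype.card α = 2 * k)
    (I J : Finset α) (hi : I.card = i) :
    ∀ K ∈ Finset.powersetCard k (Finset.univ : Finset α),
      ((k - i : ℕ) : ℝ) *
        ((if I ⊆ K ∧ K ⊆ Finset.univ \ J then (1 : ℝ) else 0) +
          (if J ⊆ K ∧ K ⊆ Finset.univ \ I then (1 : ℝ) else 0)) =
      ∑ I' ∈ (Finset.powersetCard (i + 1) ((Finset.univ : Finset α) \ J)).filter
          (fun I' => I ⊆ I'),
        ((if I' ⊆ K ∧ K ⊆ Finset.univ \ J then (1 : ℝ) else 0) +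
          (if J ⊆ K ∧ K ⊆ Finset.univ \ I' then (1 : ℝ) else 0)) := by
  intro K hK
  have hK : #K = k := (mem_powersetCard.mp hK).2
  have hKc : #(univ \ K) = k := by
    rw [card_univ_sdiff, hn, hK]
    omega
  subst hi
  rw [sum_add_distrib, mul_add]
  congr 1
  · by_cases hKJ : K ⊆ univ \ J
    · simp only [hKJ, and_true]
      rw [sum_boole_subset_filter_superset_powersetCard_succ hKJ, hK, mul_ite, mul_one, mul_zero]
    · simp [hKJ]
  · by_cases hJK : J ⊆ K
    · have hKcJ : univ \ K ⊆ univ \ J := sdiff_subset_sdiff le_rfl hJK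
      simp only [hJK, true_and, subset_univ_sdiff_comm (s := K)]
      rw [sum_boole_subset_filter_superset_powersetCard_succ hKcJ, hKc, mul_ite, mul_one, mul_zero]
    · simp [hJK]

/-- Averaging identity for `n = 2k`: if `|I| = i < k`, then
`(k - i) · p_{I,J} = Σ p_{I',J}`, the sum running over all `(i+1)`-subsets `I'` of `V`
with `I ⊆ I' ⊆ Jᶜ`. -/
theorem paired_averaging {α : Type*} [Fintype α] [DecidableEq α] (k i j : ℕ)
    (hn : Fintype.card α = 2 * k)
    (I J : Finset α) (hd : Disjoint I J) (hi : I.card = i) (hj : J.card = j)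
    (hik : i < k) :
    ∀ K ∈ Finset.powersetCard k (Finset.univ : Finset α),
      ((k - i : ℕ) : ℝ) *
        ((if I ⊆ K ∧ K ⊆ Finset.univ \ J then (1 : ℝ) else 0) +
          (if J ⊆ K ∧ K ⊆ Finset.univ \ I then (1 : ℝ) else 0)) =
      ∑ I' ∈ (Finset.powersetCard (i + 1) ((Finset.univ : Finset α) \ J)).filter
          (fun I' => I ⊆ I'),
        ((if I' ⊆ K ∧ K ⊆ Finset.univ \ J then (1 : ℝ) else 0) +
          (if J ⊆ K ∧ K ⊆ Finset.univ \ I' then (1 : ℝ) else 0)) :=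
  paired_averaging_general k i hn I J hi
end
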